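/- arXiv:1807.00152 — 4 statements merged into one kernel-verified Lean document; each statement's English description precedes it below -/
import Mathlib

section
/- Let L be a limit operator on a set X with derived topology τ_L. Then the topological space (X, τ_L) is sequential: a set C ⊆ X is closed iff it is sequentially closed. -/
/-!
If `x ∈ L σ`, then `σ` converges to `x` in `τ_L`: otherwise some open `U ∋ x` is missed by a
subsequence `σ ∘ φ`, and the closed set `Uᶜ` would contain `L (σ ∘ φ) ⊇ L σ ∋ x`. Hence a
sequentially closed set contains the `L`-limits of its sequences, i.e. it is closed.
-/

open Filter Topology

theorem tendsto_nhds_of_mem_limit {X : Type*} [TopologicalSpace X] {L : (ℕ → X) → Set X}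
    (hL : ∀ (σ : ℕ → X) (φ : ℕ → ℕ), StrictMono φ → L σ ⊆ L (σ ∘ φ))
    (hclosed : ∀ C : Set X, IsClosed C → ∀ σ : ℕ → X, (∀ n, σ n ∈ C) → L σ ⊆ C)
    {σ : ℕ → X} {x : X} (hx : x ∈ L σ) : Tendsto σ atTop (𝓝 x) := by
  rw [tendsto_nhds]
  intro U hU hxU
  by_contra hnot
  have hfreq : ∃ᶠ n in atTop, σ n ∈ Uᶜ := not_eventually.mp hnot
  obtain ⟨φ, hφ, hφU⟩ := extraction_of_frequently_atTop hfreq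
  exact hclosed Uᶜ hU.isClosed_compl (σ ∘ φ) hφU (hL σ φ hφ hx) hxU

/-- The derived topology `τ_L` of a limit operator `L` is sequential: a set is closed
iff it is sequentially closed. -/
theorem stmt_3 {X : Type*} (L : (ℕ → X) → Set X)
    (hL : ∀ (σ : ℕ → X) (φ : ℕ → ℕ), StrictMono φ → L σ ⊆ L (σ ∘ φ))
    (T : TopologicalSpace X)
    (hT : ∀ C : Set X, @IsClosed X T C ↔ ∀ σ : ℕ → X, (∀ n, σ n ∈ C) → L σ ⊆ C) :
    ∀ C : Set X, @IsClosed X T C ↔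
      (∀ (σ : ℕ → X) (x : X), (∀ n, σ n ∈ C) →
        Filter.Tendsto σ Filter.atTop (@nhds X T x) → x ∈ C) := by
  intro C
  refine ⟨fun hC σ x hσ hσx => hC.mem_of_tendsto hσx (.of_forall hσ), fun hseq => ?_⟩
  refine (hT C).2 fun σ hσ x hx => hseq σ x hσ ?_
  exact tendsto_nhds_of_mem_limit hL (fun C => (hT C).1) hx
end

section
/- In a globally hyperbolic spacetime, for any future-inextendible causal curve γ, the common future ↑I⁻(γ) := I⁺({q ∈ M : q ≫ x for all x ∈ I⁻(γ)}) is empty; in particular every future-inextendible causal curve γ satisfies ↑γ = ↑I⁻(γ), i.e., is future-regular. -/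
open Set

/-- In a globally hyperbolic spacetime (compact causal diamonds, closed causal pasts,
with the usual compatibility between the chronological relation `lt` and the causal
relation `le`), the common future `↑I⁻(γ)` of any future-inextendible causal curve
`γ : [a,b) → M` (inextendibility modeled as: `γ` eventually leaves every compact set)
is empty; in particular `↑γ = ↑I⁻(γ)`, i.e. `γ` is future-regular. -/
theorem stmt_8 {M : Type*} [TopologicalSpace M] (lt le : M → M → Prop)
    (hlttrans : ∀ {x y z : M}, lt x y → lt y z → lt x z)
    (hletrans : ∀ {x y z : M}, le x y → le y z → le x z)
    (hlt_le : ∀ {x y : M}, lt x y → le x y)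
    (hGH : ∀ p q : M, IsCompact {x | le p x ∧ le x q})
    (hJclosed : ∀ q : M, IsClosed {x | le x q})
    (hpastdense : ∀ p : M, p ∈ closure {x | lt x p})
    (a b : ℝ) (hab : a < b) (γ : ℝ → M)
    (hγcausal : ∀ s t, s ∈ Ico a b → t ∈ Ico a b → s ≤ t → le (γ s) (γ t))
    (hinext : ∀ K : Set M, IsCompact K → ∀ t₀ ∈ Ico a b, ∃ t ∈ Ico a b, t₀ ≤ t ∧ γ t ∉ K) :
    {x | ∃ q, (∀ y ∈ ⋃ t ∈ Ico a b, {z | lt z (γ t)}, lt y q) ∧ lt q x} = (∅ : Set M) ∧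
    {x | ∃ q, (∀ t ∈ Ico a b, lt (γ t) q) ∧ lt q x} =
      {x | ∃ q, (∀ y ∈ ⋃ t ∈ Ico a b, {z | lt z (γ t)}, lt y q) ∧ lt q x} := by
  have ha : a ∈ Ico a b := ⟨le_refl a, hab⟩
  -- no q can causally dominate the whole curve
  have key : ∀ q : M, ¬ (∀ t ∈ Ico a b, le (γ t) q) := by
    intro q hq
    obtain ⟨t, ht, hat, hnot⟩ := hinext {x | le (γ a) x ∧ le x q} (hGH (γ a) q) a ha
    exact hnot ⟨hγcausal a t ha ht hat, hq t ht⟩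
  have empty2 : {x | ∃ q, (∀ t ∈ Ico a b, lt (γ t) q) ∧ lt q x} = (∅ : Set M) := by
    ext x
    simp only [Set.mem_setOf_eq, Set.mem_empty_iff_false, iff_false, not_exists]
    rintro q ⟨hq, -⟩
    exact key q (fun t ht => hlt_le (hq t ht))
  have empty1 : {x | ∃ q, (∀ y ∈ ⋃ t ∈ Ico a b, {z | lt z (γ t)}, lt y q) ∧ lt q x}
      = (∅ : Set M) := by
    ext x
    simp only [Set.mem_setOf_eq, Set.mem_empty_iff_false, iff_false, not_exists]
    rintro q ⟨hq, -⟩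
    refine key q (fun t ht => ?_)
    have hsub : {z | lt z (γ t)} ⊆ {x | le x q} := by
      intro z hz
      refine hlt_le (hq z ?_)
      exact Set.mem_biUnion ht hz
    have := closure_mono hsub (hpastdense (γ t))
    rwa [(hJclosed q).closure_eq] at this
  exact ⟨empty1, empty2.trans empty1.symm⟩
end

section
/- Let γ: [a,b) → M be a future-inextendible causal curve in a spacetime such that no final segment γ|_(c,b) is an achronal null geodesic ray. Then there exists an increasing sequence t_n ↗ b with γ(t_n) ≪ γ(t_{n+1}) for all n, and hence a future-inextendible timelike curve η with I⁻(η) = I⁻(γ) and ↑η = ↑γ. In particular γ is future-regular. -/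
/-!
Because every final segment of `γ` contains a chronologically related pair, and `γ` is causal,
from any parameter `t` one can jump chronologically to a parameter beyond any prescribed `c < b`.
Iterating this jump gives a chain `γ(t₀) ≪ γ(t₁) ≪ ⋯` with `tₙ ↗ b`. The chain and the curve are
mutually cofinal for the causal relation, so by the push-up rules `≤ ∘ ≪ ⊆ ≪` and `≪ ∘ ≤ ⊆ ≪`
they have the same chronological past and the same common future; since every point of `γ` lies
in the chronological past of a later one, the common future of `γ` is that of `I⁻(γ)`.
-/

open Set Filter Topology

theorem exists_strictMono_tendsto_chain {α : Type*} [LinearOrder α] [TopologicalSpace α]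
    [OrderTopology α] [DenselyOrdered α] [FirstCountableTopology α] {a b : α} (hab : a < b)
    (P : α → α → Prop) (hstep : ∀ t ∈ Ico a b, ∀ c < b, ∃ t' ∈ Ico a b, t < t' ∧ c < t' ∧ P t t') :
    ∃ tseq : ℕ → α, StrictMono tseq ∧ (∀ n, tseq n ∈ Ico a b) ∧
      Tendsto tseq atTop (𝓝 b) ∧ ∀ n, P (tseq n) (tseq (n + 1)) := by
  obtain ⟨u, -, hu, hu_tendsto⟩ := exists_seq_strictMono_tendsto' hab
  choose next hnext_mem hnext_gt hnext_gt_bound hnext_P using hstep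
  let f : ℕ → Ico a b := fun n => Nat.rec (motive := fun _ => Ico a b) ⟨a, left_mem_Ico.2 hab⟩
    (fun n t => ⟨next t t.2 (u n) (hu n).2, hnext_mem _ _ _ _⟩) n
  refine ⟨fun n => f n, strictMono_nat_of_lt_succ fun n => hnext_gt _ _ _ _, fun n => (f n).2, ?_,
    fun n => hnext_P _ _ _ _⟩
  refine (tendsto_add_atTop_iff_nat 1).1 ?_
  exact tendsto_of_tendsto_of_tendsto_of_le_of_le hu_tendsto tendsto_const_nhds
    (fun n => (hnext_gt_bound _ _ _ _).le) fun n => (f (n + 1)).2.2.le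

section Chronology

variable {M : Type*} (lt le : M → M → Prop)

def chronoPast (S : Set M) : Set M := ⋃ y ∈ S, {x | lt x y}

def commonFuture (S : Set M) : Set M := {x | ∃ q, (∀ y ∈ S, lt y q) ∧ lt q x}

theorem chronoPast_subset_of_forall_le (hpush' : ∀ {x y z : M}, lt x y → le y z → lt x z)
    {S T : Set M} (hST : ∀ y ∈ S, ∃ z ∈ T, le y z) : chronoPast lt S ⊆ chronoPast lt T := by
  simp only [chronoPast, iUnion_subset_iff]
  intro y hy x hxy
  obtain ⟨z, hz, hyz⟩ := hST y hy
  exact mem_biUnion hz (hpush' hxy hyz)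

theorem commonFuture_subset_of_forall_le (hpush : ∀ {x y z : M}, le x y → lt y z → lt x z)
    {S T : Set M} (hST : ∀ y ∈ S, ∃ z ∈ T, le y z) : commonFuture lt T ⊆ commonFuture lt S := by
  rintro x ⟨q, hq, hqx⟩
  refine ⟨q, fun y hy => ?_, hqx⟩
  obtain ⟨z, hz, hyz⟩ := hST y hy
  exact hpush hyz (hq z hz)

theorem commonFuture_anti {S T : Set M} (hST : S ⊆ T) : commonFuture lt T ⊆ commonFuture lt S :=
  fun _ ⟨q, hq, hqx⟩ => ⟨q, fun y hy => hq y (hST hy), hqx⟩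

theorem commonFuture_chronoPast (hlttrans : ∀ {x y z : M}, lt x y → lt y z → lt x z)
    {S : Set M} (hS : S ⊆ chronoPast lt S) :
    commonFuture lt (chronoPast lt S) = commonFuture lt S := by
  refine (commonFuture_anti lt hS).antisymm ?_
  rintro x ⟨q, hq, hqx⟩
  refine ⟨q, fun y hy => ?_, hqx⟩
  obtain ⟨z, hz, hyz⟩ := mem_iUnion₂.1 hy
  exact hlttrans hyz (hq z hz)

end Chronology

section CausalCurve

variable {M : Type*} (lt le : M → M → Prop) {a b : ℝ} {γ : ℝ → M}

theorem exists_chronological_after (hpush : ∀ {x y z : M}, le x y → lt y z → lt x z)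
    (hcausal : ∀ s t, a ≤ s → s ≤ t → t < b → le (γ s) (γ t))
    (hnotnull : ∀ c, a ≤ c → c < b → ∃ s t, c < s ∧ s < t ∧ t < b ∧ lt (γ s) (γ t))
    {t : ℝ} (ht : t ∈ Ico a b) {c : ℝ} (hc : c < b) :
    ∃ t' ∈ Ico a b, t < t' ∧ c < t' ∧ lt (γ t) (γ t') := by
  obtain ⟨s, t', hs, hst', ht'b, hlt⟩ :=
    hnotnull (max t c) (ht.1.trans (le_max_left t c)) (max_lt ht.2 hc)
  obtain ⟨hts, hcs⟩ := max_lt_iff.1 hs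
  exact ⟨t', ⟨(ht.1.trans hts.le).trans hst'.le, ht'b⟩, hts.trans hst', hcs.trans hst',
    hpush (hcausal t s ht.1 hts.le (hst'.trans ht'b)) hlt⟩

theorem image_subset_chronoPast_image (hpush : ∀ {x y z : M}, le x y → lt y z → lt x z)
    (hcausal : ∀ s t, a ≤ s → s ≤ t → t < b → le (γ s) (γ t))
    (hnotnull : ∀ c, a ≤ c → c < b → ∃ s t, c < s ∧ s < t ∧ t < b ∧ lt (γ s) (γ t)) :
    γ '' Ico a b ⊆ chronoPast lt (γ '' Ico a b) := by
  rintro _ ⟨t, ht, rfl⟩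
  obtain ⟨t', ht', -, -, hlt⟩ := exists_chronological_after lt le hpush hcausal hnotnull ht ht.2
  exact mem_biUnion (mem_image_of_mem γ ht') hlt

variable {tseq : ℕ → ℝ}

theorem forall_range_exists_image_le (hcausal : ∀ s t, a ≤ s → s ≤ t → t < b → le (γ s) (γ t))
    (hmem : ∀ n, tseq n ∈ Ico a b) :
    ∀ y ∈ range fun n => γ (tseq n), ∃ z ∈ γ '' Ico a b, le y z := by
  rintro _ ⟨n, rfl⟩
  exact ⟨_, mem_image_of_mem γ (hmem n), hcausal _ _ (hmem n).1 le_rfl (hmem n).2⟩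

theorem forall_image_exists_range_le (hcausal : ∀ s t, a ≤ s → s ≤ t → t < b → le (γ s) (γ t))
    (hmem : ∀ n, tseq n ∈ Ico a b) (htend : Tendsto tseq atTop (𝓝 b)) :
    ∀ y ∈ γ '' Ico a b, ∃ z ∈ range fun n => γ (tseq n), le y z := by
  rintro _ ⟨t, ht, rfl⟩
  obtain ⟨n, hn⟩ := (htend.eventually (eventually_ge_nhds ht.2)).exists
  exact ⟨_, mem_range_self n, hcausal t _ ht.1 hn (hmem n).2⟩

end CausalCurve

/-- If no final segment of the future-inextendible causal curve `γ : [a,b) → M` is an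
achronal null geodesic ray (i.e. every final segment contains a chronologically related
pair of points), then there is an increasing sequence `t_n ↗ b` with
`γ(t_n) ≪ γ(t_{n+1})`; hence the future chain `γ(t_n)` (a timelike curve `η`) has the
same past and the same common future as `γ`; in particular `γ` is future-regular:
`↑γ = ↑I⁻(γ)`. -/
theorem stmt_9 {M : Type*} (lt le : M → M → Prop)
    (hlttrans : ∀ {x y z : M}, lt x y → lt y z → lt x z)
    (hpush : ∀ {x y z : M}, le x y → lt y z → lt x z)
    (hpush' : ∀ {x y z : M}, lt x y → le y z → lt x z)
    (a b : ℝ) (hab : a < b) (γ : ℝ → M)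
    (hcausal : ∀ s t, a ≤ s → s ≤ t → t < b → le (γ s) (γ t))
    (hnotnull : ∀ c, a ≤ c → c < b → ∃ s t, c < s ∧ s < t ∧ t < b ∧ lt (γ s) (γ t)) :
    ∃ tseq : ℕ → ℝ, StrictMono tseq ∧ (∀ n, tseq n ∈ Ico a b) ∧
      Filter.Tendsto tseq Filter.atTop (nhds b) ∧
      (∀ n, lt (γ (tseq n)) (γ (tseq (n + 1)))) ∧
      ((⋃ n, {x | lt x (γ (tseq n))}) = (⋃ t ∈ Ico a b, {x | lt x (γ t)})) ∧
      ({x | ∃ q, (∀ n, lt (γ (tseq n)) q) ∧ lt q x} =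
        {x | ∃ q, (∀ t ∈ Ico a b, lt (γ t) q) ∧ lt q x}) ∧
      ({x | ∃ q, (∀ t ∈ Ico a b, lt (γ t) q) ∧ lt q x} =
        {x | ∃ q, (∀ y ∈ ⋃ t ∈ Ico a b, {z | lt z (γ t)}, lt y q) ∧ lt q x}) := by
  obtain ⟨tseq, hmono, hmem, htend, hchain⟩ :=
    exists_strictMono_tendsto_chain hab (fun s t => lt (γ s) (γ t))
      fun t ht c hc => exists_chronological_after lt le hpush hcausal hnotnull ht hc
  have hST := forall_range_exists_image_le le hcausal hmem
  have hTS := forall_image_exists_range_le le hcausal hmem htend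
  have hpast := (chronoPast_subset_of_forall_le lt le hpush' hST).antisymm
    (chronoPast_subset_of_forall_le lt le hpush' hTS)
  have hfuture := (commonFuture_subset_of_forall_le lt le hpush hTS).antisymm
    (commonFuture_subset_of_forall_le lt le hpush hST)
  have hregular := (commonFuture_chronoPast lt hlttrans
    (image_subset_chronoPast_image lt le hpush hcausal hnotnull)).symm
  simp only [chronoPast, commonFuture, biUnion_range, biUnion_image, forall_mem_range,
    forall_mem_image] at hpast hfuture hregular
  exact ⟨tseq, hmono, hmem, htend, hchain, hpast, hfuture, hregular⟩
end

section
/- Let (M,g) be a product spacetime ℝ × S with metric −dt² ⊕ h, where (S,h) is a compact complete Riemannian manifold of dimension ≥ 1. Then no future-inextendible null geodesic in M is achronal; i.e., M contains no null geodesic rays (every inextendible null geodesic contains two chronologically related points). -/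
/-! A compact space has finite diameter `D`, so any two events whose time coordinates differ
by more than `D` are chronologically related, whatever their spatial positions; along a null
geodesic the time coordinate is the affine parameter, hence grows without bound. -/

open Metric Set

theorem dist_lt_of_diam_univ_lt {S : Type*} [PseudoMetricSpace S] [BoundedSpace S]
    (x y : S) {r : ℝ} (hr : diam (univ : Set S) < r) : dist x y < r :=
  (dist_le_diam_of_mem BoundedSpace.bounded_univ (mem_univ x) (mem_univ y)).trans_lt hr

theorem stmt_18_general {S : Type*} [MetricSpace S] [CompactSpace S]
    (lt : (ℝ × S) → (ℝ × S) → Prop)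
    (hlt : ∀ a b : ℝ × S, lt a b ↔ dist a.2 b.2 < b.1 - a.1)
    (c : ℝ → S)
    (γ : ℝ → ℝ × S) (hγ : ∀ s, γ s = (s, c s)) :
    ∃ s t : ℝ, s < t ∧ lt (γ s) (γ t) := by
  set D := diam (univ : Set S)
  have hD : 0 ≤ D := diam_nonneg
  refine ⟨0, D + 1, by linarith, ?_⟩
  rw [hlt, hγ, hγ, sub_zero]
  exact dist_lt_of_diam_univ_lt _ _ (lt_add_one D)

/-- In a product spacetime `ℝ × S` with metric `−dt² ⊕ h`, where `(S,h)` is a compact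
complete Riemannian manifold (of dimension ≥ 1, modeled here via its metric-space
structure with chronology `(t₀,x₀) ≪ (t₁,x₁) ↔ d(x₀,x₁) < t₁ − t₀`), no inextendible
null geodesic is achronal: every null geodesic `γ(s) = (s, c(s))` (whose projection
`c` is a unit-speed geodesic of `S`, hence 1-Lipschitz) contains two chronologically
related points. -/
theorem stmt_18 {S : Type*} [MetricSpace S] [CompactSpace S] [Nontrivial S]
    (lt : (ℝ × S) → (ℝ × S) → Prop)
    (hlt : ∀ a b : ℝ × S, lt a b ↔ dist a.2 b.2 < b.1 - a.1)
    (c : ℝ → S) (hc : ∀ s t : ℝ, dist (c s) (c t) ≤ |s - t|)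
    (γ : ℝ → ℝ × S) (hγ : ∀ s, γ s = (s, c s)) :
    ∃ s t : ℝ, s < t ∧ lt (γ s) (γ t) :=
  stmt_18_general lt hlt c γ hγ
end
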